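/- Let f_Y be a smooth strictly positive probability density on ℝ, Φ the standard normal CDF, φ its density, σ_N > 0, and a ∈ ℝ with f_Y'(a) < 0. Define h(ξ) = (1/σ_N)φ(ξ/(2σ_N))·(F_Y(a+ξ) − F_Y(a)) − f_Y(a+ξ)·(2Φ(ξ/(2σ_N)) − 1), where F_Y is the CDF of f_Y. Then h(ξ) = −(φ(0)/(2σ_N)) f_Y'(a) ξ² + O(ξ³) as ξ → 0⁺, and hence h(ξ) > 0 for all sufficiently small ξ > 0. -/

import Mathlib

open Real Set MeasureTheory Filter Asymptotics

/-- Standard normal density. -/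
noncomputable def stdGaussPDF (x : ℝ) : ℝ := (Real.sqrt (2 * Real.pi))⁻¹ * Real.exp (-x ^ 2 / 2)

/-- Standard normal CDF. -/
noncomputable def stdGaussCDF (x : ℝ) : ℝ := ∫ t in Set.Iic x, stdGaussPDF t

set_option linter.unusedVariables false

lemma gauss_contDiff : ContDiff ℝ 3 stdGaussPDF := by
  unfold stdGaussPDF
  exact contDiff_const.mul (((contDiff_id.pow 2).neg.div_const 2).exp)

lemma gauss_cont : Continuous stdGaussPDF := gauss_contDiff.continuous

lemma gauss_eq : stdGaussPDF = fun x => (Real.sqrt (2 * Real.pi))⁻¹ * Real.exp (-(1/2) * x ^ 2) := by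
  funext x; unfold stdGaussPDF; congr 1; ring

lemma gauss_int : Integrable stdGaussPDF := by
  rw [gauss_eq]
  exact (integrable_exp_neg_mul_sq (by norm_num : (0:ℝ) < 1/2)).const_mul _

lemma gauss_total : ∫ x, stdGaussPDF x = 1 := by
  rw [gauss_eq, integral_const_mul, integral_gaussian,
    show Real.pi / (1/2) = 2 * Real.pi by ring]
  exact inv_mul_cancel₀ (Real.sqrt_ne_zero'.mpr (by positivity))

lemma gauss_even (x : ℝ) : stdGaussPDF (-x) = stdGaussPDF x := by
  unfold stdGaussPDF; rw [neg_pow]; norm_num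

lemma gauss_pos (x : ℝ) : 0 < stdGaussPDF x := by
  unfold stdGaussPDF
  positivity

lemma gauss_cdf_zero : stdGaussCDF 0 = 1/2 := by
  have h1 : stdGaussCDF 0 + ∫ x in Ioi (0:ℝ), stdGaussPDF x = 1 := by
    rw [stdGaussCDF]
    rw [intervalIntegral.integral_Iic_add_Ioi gauss_int.integrableOn gauss_int.integrableOn]
    exact gauss_total
  have h2 : (∫ x in Ioi (0:ℝ), stdGaussPDF x) = stdGaussCDF 0 := by
    have := integral_comp_neg_Iic (0:ℝ) stdGaussPDF
    simp only [gauss_even, neg_zero] at this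
    rw [← this, stdGaussCDF]
  rw [h2] at h1; linarith

lemma cdf_hasDerivAt {f : ℝ → ℝ} (hi : Integrable f) (hc : Continuous f) (x : ℝ) :
    HasDerivAt (fun y => ∫ t in Set.Iic y, f t) (f x) x := by
  have heq : (fun y => ∫ t in Set.Iic y, f t)
      = fun y => (∫ t in Set.Iic (0:ℝ), f t) + ∫ t in (0:ℝ)..y, f t := by
    funext y
    rw [← intervalIntegral.integral_Iic_sub_Iic hi.integrableOn hi.integrableOn]
    ring
  rw [heq]
  exact ((intervalIntegral.integral_hasDerivAt_right (hi.intervalIntegrable)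
    (hc.stronglyMeasurable.stronglyMeasurableAtFilter) hc.continuousAt)).const_add _

lemma gauss_hasDerivAt (x : ℝ) : HasDerivAt stdGaussPDF (-x * stdGaussPDF x) x := by
  have hu : HasDerivAt (fun x : ℝ => -x ^ 2 / 2) (-x) x := by
    have := ((hasDerivAt_pow 2 x).neg.div_const 2)
    refine this.congr_deriv ?_
    push_cast
    ring
  have h := (Real.hasDerivAt_exp (-x ^ 2 / 2)).comp x hu
  have h2 := h.const_mul ((Real.sqrt (2 * Real.pi))⁻¹)
  refine h2.congr_deriv ?_
  unfold stdGaussPDF; simp [Function.comp]; ring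

lemma cdf_contDiff {f : ℝ → ℝ} {n : ℕ} (hi : Integrable f) (hc : ContDiff ℝ n f) :
    ContDiff ℝ (n + 1 : ℕ) (fun y => ∫ t in Set.Iic y, f t) := by
  have hd : ∀ x, HasDerivAt (fun y => ∫ t in Set.Iic y, f t) (f x) x :=
    cdf_hasDerivAt hi hc.continuous
  have : deriv (fun y => ∫ t in Set.Iic y, f t) = f := funext fun x => (hd x).deriv
  rw [show ((n + 1 : ℕ) : WithTop ℕ∞) = (n : WithTop ℕ∞) + 1 by norm_cast]
  rw [contDiff_succ_iff_deriv]
  refine ⟨fun x => (hd x).differentiableAt, ?_, ?_⟩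
  · intro h; exact absurd h (by simp)
  · rw [this]; exact hc

lemma iterDW {g : ℝ → ℝ} {n : ℕ∞} (hg : ContDiff ℝ n g) {s : Set ℝ} (hs : UniqueDiffOn ℝ s)
    {x : ℝ} (hx : x ∈ s) {m : ℕ} (hm : (m : ℕ∞) ≤ n) :
    iteratedDerivWithin m g s x = iteratedDeriv m g x := by
  rw [iteratedDerivWithin_eq_iteratedFDerivWithin, iteratedDeriv_eq_iteratedFDeriv]
  have h := ((contDiff_iff_ftaylorSeries.mp hg).hasFTaylorSeriesUpToOn s)
  have h2 := h.eq_iteratedFDerivWithin_of_uniqueDiffOn (m := m) (by exact_mod_cast hm) hs hx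
  rw [← h2]; rfl

/-- Let `f_Y` be a smooth strictly positive density on `ℝ` with CDF `F_Y`, and suppose
`f_Y'(a) < 0`. Then
`h(ξ) = (1/σ_N)φ(ξ/(2σ_N))·(F_Y(a+ξ) − F_Y(a)) − f_Y(a+ξ)·(2Φ(ξ/(2σ_N)) − 1)`
satisfies `h(ξ) = −(φ(0)/(2σ_N)) f_Y'(a) ξ² + O(ξ³)` as `ξ → 0⁺`, hence `h(ξ) > 0`
for all sufficiently small `ξ > 0`. -/
theorem leakage_initially_increasing_general (σN : ℝ) (hσN : 0 < σN)
    (fY : ℝ → ℝ) (hsmooth : ContDiff ℝ (⊤ : ℕ∞) fY) (hpos : ∀ y, 0 < fY y)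
    (hint : ∫ y, fY y = 1)
    (FY : ℝ → ℝ) (hFY : ∀ y, FY y = ∫ t in Set.Iic y, fY t)
    (a : ℝ) (hderiv : deriv fY a < 0) :
    (fun ξ : ℝ =>
        ((1 / σN) * stdGaussPDF (ξ / (2 * σN)) * (FY (a + ξ) - FY a)
          - fY (a + ξ) * (2 * stdGaussCDF (ξ / (2 * σN)) - 1))
        - (-(stdGaussPDF 0 / (2 * σN)) * deriv fY a * ξ ^ 2))
      =O[nhdsWithin 0 (Set.Ioi 0)] (fun ξ : ℝ => ξ ^ 3) ∧
    ∀ᶠ ξ in nhdsWithin (0 : ℝ) (Set.Ioi 0),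
      0 < (1 / σN) * stdGaussPDF (ξ / (2 * σN)) * (FY (a + ξ) - FY a)
          - fY (a + ξ) * (2 * stdGaussCDF (ξ / (2 * σN)) - 1) := by
  have hfY3 : ContDiff ℝ 3 fY := hsmooth.of_le (by exact WithTop.coe_le_coe.mpr le_top)
  have hfYint : Integrable fY := by
    by_contra h
    rw [MeasureTheory.integral_undef h] at hint
    norm_num at hint
  have hFYeq : FY = fun y => ∫ t in Set.Iic y, fY t := funext hFY
  have hc2 : (2 * σN) ≠ 0 := by positivity
  -- basic functions
  set A : ℝ → ℝ := fun ξ => (1 / σN) * stdGaussPDF (ξ / (2 * σN)) with hA_def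
  set B : ℝ → ℝ := fun ξ => FY (a + ξ) - FY a with hB_def
  set C : ℝ → ℝ := fun ξ => fY (a + ξ) with hC_def
  set D : ℝ → ℝ := fun ξ => 2 * stdGaussCDF (ξ / (2 * σN)) - 1 with hD_def
  set g : ℝ → ℝ := fun ξ => A ξ * B ξ - C ξ * D ξ with hg_def
  set A1 : ℝ → ℝ := fun ξ => (1 / σN) * ((-(ξ / (2 * σN)) * stdGaussPDF (ξ / (2 * σN))) / (2 * σN))
    with hA1_def
  set E : ℝ → ℝ := fun ξ => deriv fY (a + ξ) with hE_def
  -- derivative facts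
  have hdiv : ∀ ξ : ℝ, HasDerivAt (fun x : ℝ => x / (2 * σN)) (1 / (2 * σN)) ξ := by
    intro ξ
    simpa using (hasDerivAt_id ξ).div_const (2 * σN)
  have hshift : ∀ ξ : ℝ, HasDerivAt (fun x : ℝ => a + x) 1 ξ := by
    intro ξ
    simpa using (hasDerivAt_id ξ).const_add a
  have hA : ∀ ξ, HasDerivAt A (A1 ξ) ξ := by
    intro ξ
    have h := ((gauss_hasDerivAt (ξ / (2 * σN))).comp ξ (hdiv ξ)).const_mul (1 / σN)
    refine h.congr_deriv ?_
    rw [hA1_def]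
    ring
  have hB : ∀ ξ, HasDerivAt B (C ξ) ξ := by
    intro ξ
    have h1 : HasDerivAt FY (fY (a + ξ)) (a + ξ) := by
      rw [hFYeq]; exact cdf_hasDerivAt hfYint hfY3.continuous _
    have := (h1.comp ξ (hshift ξ)).sub_const (FY a)
    exact this.congr_deriv (mul_one _)
  have hfY' : ∀ x, HasDerivAt fY (deriv fY x) x :=
    fun x => ((hfY3.differentiable (by norm_num)) x).hasDerivAt
  have hC : ∀ ξ, HasDerivAt C (E ξ) ξ := by
    intro ξ
    have := (hfY' (a + ξ)).comp ξ (hshift ξ)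
    exact this.congr_deriv (mul_one _)
  have hD : ∀ ξ, HasDerivAt D (A ξ) ξ := by
    intro ξ
    have h1 : HasDerivAt stdGaussCDF (stdGaussPDF (ξ / (2 * σN))) (ξ / (2 * σN)) :=
      cdf_hasDerivAt gauss_int gauss_cont _
    have h := (((h1.comp ξ (hdiv ξ))).const_mul 2).sub_const 1
    refine h.congr_deriv ?_
    rw [hA_def]
    field_simp
  set g1 : ℝ → ℝ := fun ξ => (A1 ξ * B ξ + A ξ * C ξ) - (E ξ * D ξ + C ξ * A ξ) with hg1_def
  have hg1 : ∀ ξ, HasDerivAt g (g1 ξ) ξ := by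
    intro ξ
    exact ((hA ξ).mul (hB ξ)).sub ((hC ξ).mul (hD ξ))
  have hderivg : deriv g = g1 := funext fun ξ => (hg1 ξ).deriv
  -- values at 0
  have hB0 : B 0 = 0 := by simp [hB_def]
  have hD0 : D 0 = 0 := by
    simp [hD_def, gauss_cdf_zero]
  have hA10 : A1 0 = 0 := by simp [hA1_def]
  have hg0 : g 0 = 0 := by rw [hg_def]; simp [hB0, hD0]
  have hg10 : g1 0 = 0 := by rw [hg1_def]; simp [hB0, hD0, hA10]; ring
  -- second derivative at 0
  have hA1d : HasDerivAt A1 ((1 / σN) * (((-(1 / (2 * σN)) * stdGaussPDF 0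
      + -(0 / (2 * σN)) * (-(0 / (2 * σN)) * stdGaussPDF (0 / (2 * σN))) * (1 / (2 * σN)))
        / (2 * σN)))) 0 := by
    have hneg : HasDerivAt (fun x : ℝ => -(x / (2 * σN))) (-(1 / (2 * σN))) 0 := (hdiv 0).neg
    have hcomp : HasDerivAt (fun x : ℝ => stdGaussPDF (x / (2 * σN)))
        (-(0 / (2 * σN)) * stdGaussPDF (0 / (2 * σN)) * (1 / (2 * σN))) 0 :=
      (gauss_hasDerivAt (0 / (2 * σN))).comp (h₂ := stdGaussPDF) 0 (hdiv 0)
    have := ((hneg.mul hcomp).div_const (2 * σN)).const_mul (1 / σN)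
    refine this.congr_deriv ?_
    norm_num
  have hE0 : HasDerivAt E (deriv (deriv fY) a) 0 := by
    have h2 : ContDiff ℝ 2 (deriv fY) := by
      have := (contDiff_succ_iff_deriv (n := 2)).mp (hsmooth.of_le (by exact WithTop.coe_le_coe.mpr le_top) : ContDiff ℝ (2 + 1) fY)
      exact this.2.2
    have h3 : HasDerivAt (deriv fY) (deriv (deriv fY) a) a :=
      ((h2.differentiable (by norm_num)) a).hasDerivAt
    have h3' : HasDerivAt (deriv fY) (deriv (deriv fY) a) (a + 0) := by simpa using h3
    have := h3'.comp 0 (hshift 0)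
    exact this.congr_deriv (by simp)
  set V : ℝ := -(stdGaussPDF 0 / σN) * deriv fY a with hV_def
  have hg1d : HasDerivAt g1 V 0 := by
    have h := ((hA1d.mul (hB 0)).add ((hA 0).mul (hC 0))).sub
      ((hE0.mul (hD 0)).add ((hC 0).mul (hA 0)))
    refine h.congr_deriv ?_
    rw [hV_def]
    simp only [hB0, hD0, hA10, hA_def, hC_def, hE_def]
    norm_num
    ring
  -- Taylor expansion on Icc 0 1
  have hΦ3 : ContDiff ℝ 3 stdGaussCDF := by
    have := cdf_contDiff (n := 2) gauss_int (gauss_contDiff.of_le (by norm_num))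
    exact this
  have hFY3 : ContDiff ℝ 3 FY := by
    rw [hFYeq]
    exact cdf_contDiff (n := 2) hfYint (hfY3.of_le (by norm_num))
  have hdivCD : ContDiff ℝ 3 (fun x : ℝ => x / (2 * σN)) := contDiff_id.div_const _
  have hshiftCD : ContDiff ℝ 3 (fun x : ℝ => a + x) := contDiff_const.add contDiff_id
  have hgCD : ContDiff ℝ 3 g := by
    rw [hg_def, hA_def, hB_def, hC_def, hD_def]
    exact ((contDiff_const.mul (gauss_contDiff.comp hdivCD)).mul
        ((hFY3.comp hshiftCD).sub contDiff_const)).sub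
      ((hfY3.comp hshiftCD).mul ((contDiff_const.mul (hΦ3.comp hdivCD)).sub contDiff_const))
  obtain ⟨K, hK⟩ := exists_taylor_mean_remainder_bound (f := g) (a := 0) (b := 1) (n := 2)
    zero_le_one (by exact_mod_cast hgCD.contDiffOn)
  have hmem0 : (0 : ℝ) ∈ Icc (0:ℝ) 1 := by norm_num
  have hUD : UniqueDiffOn ℝ (Icc (0:ℝ) 1) := uniqueDiffOn_Icc zero_lt_one
  have hgCD' : ContDiff ℝ (3 : ℕ∞) g := by exact_mod_cast hgCD
  have hiter : ∀ m : ℕ, m ≤ 3 → iteratedDerivWithin m g (Icc 0 1) 0 = iteratedDeriv m g 0 := by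
    intro m hm
    exact iterDW hgCD' hUD hmem0 (by exact_mod_cast hm)
  have hiter1 : iteratedDeriv 1 g 0 = 0 := by
    rw [iteratedDeriv_one, hderivg, hg10]
  have hiter2 : iteratedDeriv 2 g 0 = V := by
    rw [show (2:ℕ) = 1 + 1 from rfl, iteratedDeriv_succ, iteratedDeriv_one, hderivg]
    exact hg1d.deriv
  have htaylor : ∀ x : ℝ, taylorWithinEval g 2 (Icc 0 1) 0 x = (V / 2) * x ^ 2 := by
    intro x
    rw [taylor_within_apply]
    rw [Finset.sum_range_succ, Finset.sum_range_succ, Finset.sum_range_one]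
    rw [hiter 0 (by norm_num), hiter 1 (by norm_num), hiter 2 (by norm_num)]
    rw [iteratedDeriv_zero, hiter1, hiter2, hg0]
    norm_num
    ring
  have hKbound : ∀ x ∈ Icc (0:ℝ) 1, |g x - (V/2) * x ^ 2| ≤ K * x ^ 3 := by
    intro x hx
    have := hK x hx
    rw [htaylor x] at this
    simpa using this
  -- the coefficient
  have hVeq : V / 2 = -(stdGaussPDF 0 / (2 * σN)) * deriv fY a := by
    rw [hV_def]; ring
  have hcpos : 0 < V / 2 := by
    rw [hVeq]
    have h1 : 0 < stdGaussPDF 0 / (2 * σN) := div_pos (gauss_pos 0) (by positivity)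
    nlinarith
  set K' : ℝ := max K 1 with hK'_def
  have hK'pos : 0 < K' := lt_of_lt_of_le one_pos (le_max_right _ _)
  have hK'bound : ∀ x ∈ Ioo (0:ℝ) 1, |g x - (V/2) * x ^ 2| ≤ K' * x ^ 3 := by
    intro x hx
    refine (hKbound x ⟨hx.1.le, hx.2.le⟩).trans ?_
    have h0 : (0:ℝ) ≤ x ^ 3 := pow_nonneg hx.1.le 3
    nlinarith [le_max_left K 1]
  have hIoo : Ioo (0:ℝ) 1 ∈ nhdsWithin (0:ℝ) (Set.Ioi 0) :=
    Ioo_mem_nhdsGT_of_mem (by norm_num)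
  have hfun : (fun ξ : ℝ =>
        ((1 / σN) * stdGaussPDF (ξ / (2 * σN)) * (FY (a + ξ) - FY a)
          - fY (a + ξ) * (2 * stdGaussCDF (ξ / (2 * σN)) - 1))
        - (-(stdGaussPDF 0 / (2 * σN)) * deriv fY a * ξ ^ 2))
      = fun ξ => g ξ - (V/2) * ξ ^ 2 := by
    funext ξ
    rw [← hVeq]
  constructor
  · rw [hfun, Asymptotics.isBigO_iff]
    refine ⟨K', ?_⟩
    filter_upwards [hIoo] with x hx
    have h := hK'bound x hx
    have hx3 : ‖x ^ 3‖ = x ^ 3 := abs_of_nonneg (pow_nonneg hx.1.le 3)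
    rw [Real.norm_eq_abs, hx3]
    exact h
  · have hsmall : Ioo (0:ℝ) (min 1 ((V/2) / K')) ∈ nhdsWithin (0:ℝ) (Set.Ioi 0) :=
      Ioo_mem_nhdsGT_of_mem ⟨le_refl _, lt_min one_pos (div_pos hcpos hK'pos)⟩
    filter_upwards [hsmall] with x hx
    show 0 < g x
    have hx1 : x ∈ Ioo (0:ℝ) 1 := ⟨hx.1, lt_of_lt_of_le hx.2 (min_le_left _ _)⟩
    have hb := hK'bound x hx1
    have hxc : x < (V/2) / K' := lt_of_lt_of_le hx.2 (min_le_right _ _)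
    have h1 : K' * x < V / 2 := by
      rw [lt_div_iff₀ hK'pos] at hxc
      linarith [mul_comm K' x]
    have h2 : g x ≥ (V/2) * x ^ 2 - K' * x ^ 3 := by
      have := abs_le.mp hb
      linarith [this.1]
    have h3 : (V/2) * x ^ 2 - K' * x ^ 3 > 0 := by
      have hx0 : 0 < x := hx.1
      nlinarith [mul_lt_mul_of_pos_right h1 (pow_pos hx0 2)]
    exact lt_of_lt_of_le h3 h2
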